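/- Let k ≥ 1 be an integer, let G = (V, E) be a finite simple graph with positive real edge weights w : E → ℝ_{>0}, and suppose every matching in G has at most k edges. Let G' = (V, E') with E' ⊆ E (edges of E' keeping their weights) be such that for every edge uv ∈ E ∖ E', either deg_{G'}^{w(uv)}(u) ≥ 5k or deg_{G'}^{w(uv)}(v) ≥ 5k. Then the maximum total weight of a matching in G' equals the maximum total weight of a matching in G. -/

import Mathlib

open scoped Classical

/-- `M` is a matching of the graph `G`: a finite set of edges of `G`
that are pairwise vertex-disjoint. -/
def IsMatchingSet {V : Type*} (G : SimpleGraph V) (M : Finset (Sym2 V)) : Prop :=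
  (↑M : Set (Sym2 V)) ⊆ G.edgeSet ∧
    ∀ e ∈ M, ∀ f ∈ M, e ≠ f → ∀ v : V, v ∈ e → v ∉ f

/-- `degW G w t x` is the number of edges of `G` incident to `x` whose weight
(under `w`) equals exactly `t`. -/
noncomputable def degW {V : Type*} [Fintype V] [DecidableEq V]
    (G : SimpleGraph V) [DecidableRel G.Adj] (w : Sym2 V → ℝ) (t : ℝ) (x : V) : ℕ :=
  (G.edgeFinset.filter (fun e => x ∈ e ∧ w e = t)).card

/-!
Every matching of `G` can be turned into a matching of `G'` of the same weight, one edge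
at a time. If an edge `e` of a matching `M` was deleted, one of its endpoints `x` has more
than `2k ≥ 2|M|` edges in `G'` of weight `w e`. At most `2|M|` vertices are covered by `M`,
so one of these edges joins `x` to an uncovered vertex, and it can replace `e` in `M`.
-/

open Finset

namespace IsMatchingSet

variable {V : Type*} {G H : SimpleGraph V} {M : Finset (Sym2 V)}

lemma mono (hGH : G ≤ H) (hM : IsMatchingSet G M) : IsMatchingSet H M :=
  ⟨hM.1.trans (SimpleGraph.edgeSet_mono hGH), hM.2⟩

lemma insert_erase [DecidableEq V] (hM : IsMatchingSet G M) {e : Sym2 V} (he : e ∈ M)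
    {x y : V} (hx : x ∈ e) (hy : y ∉ M.biUnion Sym2.toFinset) (hxy : G.Adj x y) :
    IsMatchingSet G (insert s(x, y) (M.erase e)) := by
  have hfresh : ∀ f ∈ M.erase e, ∀ z ∈ s(x, y), z ∉ f := by
    intro f hf z hz hzf
    obtain ⟨hfe, hfM⟩ := mem_erase.1 hf
    rcases Sym2.mem_iff.1 hz with rfl | rfl
    · exact hM.2 e he f hfM (Ne.symm hfe) z hx hzf
    · exact hy (mem_biUnion.2 ⟨f, hfM, Sym2.mem_toFinset.2 hzf⟩)
  refine ⟨fun f hf => ?_, fun f₁ hf₁ f₂ hf₂ hne z hz₁ hz₂ => ?_⟩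
  · rcases mem_insert.1 hf with rfl | hf
    · exact hxy
    · exact hM.1 (mem_of_mem_erase hf)
  · rcases mem_insert.1 hf₁ with rfl | hf₁ <;> rcases mem_insert.1 hf₂ with rfl | hf₂
    · exact hne rfl
    · exact hfresh f₂ hf₂ z hz₁ hz₂
    · exact hfresh f₁ hf₁ z hz₂ hz₁
    · exact hM.2 f₁ (mem_of_mem_erase hf₁) f₂ (mem_of_mem_erase hf₂) hne z hz₁ hz₂

end IsMatchingSet

lemma card_biUnion_toFinset_le {V : Type*} [DecidableEq V] (M : Finset (Sym2 V)) :
    #(M.biUnion Sym2.toFinset) ≤ 2 * #M := by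
  refine card_biUnion_le.trans ?_
  calc ∑ e ∈ M, #e.toFinset ≤ ∑ _e ∈ M, 2 :=
        sum_le_sum fun e _ => by rw [Sym2.card_toFinset]; split_ifs <;> omega
    _ = 2 * #M := by rw [sum_const, smul_eq_mul, mul_comm]

section Weighted

variable {V : Type*} [Fintype V] [DecidableEq V]

lemma exists_adj_notMem_of_card_lt_degW (G : SimpleGraph V) [DecidableRel G.Adj]
    (w : Sym2 V → ℝ) (t : ℝ) (x : V) (S : Finset V) (hS : #S < degW G w t x) :
    ∃ y ∉ S, G.Adj x y ∧ w s(x, y) = t := by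
  by_contra! hnone
  have hsub :
      G.edgeFinset.filter (fun e => x ∈ e ∧ w e = t) ⊆ S.image (fun y => s(x, y)) := by
    intro e he
    obtain ⟨heG, hxe, hwe⟩ := by simpa only [mem_filter, SimpleGraph.mem_edgeFinset] using he
    obtain ⟨y, rfl⟩ := Sym2.mem_iff_exists.1 hxe
    refine mem_image.2 ⟨y, ?_, rfl⟩
    by_contra hyS
    exact hnone y hyS heG hwe
  exact (card_le_card hsub |>.trans card_image_le).not_gt hS

variable {G G' : SimpleGraph V} [DecidableRel G'.Adj] {w : Sym2 V → ℝ}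

lemma IsMatchingSet.exists_replace_edge (hG' : G' ≤ G) {M : Finset (Sym2 V)}
    (hM : IsMatchingSet G M) {e : Sym2 V} (he : e ∈ M) {x : V} (hx : x ∈ e)
    (hdeg : 2 * #M < degW G' w (w e) x) :
    ∃ e' ∈ G'.edgeSet, w e' = w e ∧ e' ∉ M.erase e ∧
      IsMatchingSet G (insert e' (M.erase e)) := by
  have hcov := (card_biUnion_toFinset_le M).trans_lt hdeg
  obtain ⟨y, hy, hxy, hw⟩ := exists_adj_notMem_of_card_lt_degW G' w (w e) x _ hcov
  refine ⟨s(x, y), hxy, hw, fun hxyM => hy ?_, hM.insert_erase he hx hy (hG' hxy)⟩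
  exact mem_biUnion.2 ⟨_, mem_of_mem_erase hxyM, Sym2.mem_toFinset.2 (Sym2.mem_mk_right x y)⟩

theorem IsMatchingSet.exists_subgraph_sum_eq (k : ℕ) (hG' : G' ≤ G)
    (hmatch : ∀ M : Finset (Sym2 V), IsMatchingSet G M → #M ≤ k)
    (hdel : ∀ u v : V, G.Adj u v → ¬ G'.Adj u v →
      2 * k < degW G' w (w s(u, v)) u ∨ 2 * k < degW G' w (w s(u, v)) v)
    {M : Finset (Sym2 V)} (hM : IsMatchingSet G M) :
    ∃ M' : Finset (Sym2 V), IsMatchingSet G' M' ∧ ∑ e ∈ M', w e = ∑ e ∈ M, w e := by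
  induction hn : #(M.filter (· ∉ G'.edgeSet)) generalizing M with
  | zero =>
    have hgood : ∀ e ∈ M, e ∈ G'.edgeSet := fun e he =>
      not_not.1 (filter_eq_empty_iff.1 (card_eq_zero.1 hn) he)
    exact ⟨M, ⟨hgood, hM.2⟩, rfl⟩
  | succ n ih =>
    obtain ⟨e, he⟩ := card_pos.1 (by rw [hn]; exact n.succ_pos)
    obtain ⟨heM, heG'⟩ := mem_filter.1 he
    have hx : ∃ x ∈ e, 2 * #M < degW G' w (w e) x := by
      have hMk := hmatch M hM
      induction e using Sym2.ind with
      | h u v =>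
        rcases hdel u v (hM.1 heM) (fun h => heG' h) with hu | hv
        · exact ⟨u, Sym2.mem_mk_left u v, by omega⟩
        · exact ⟨v, Sym2.mem_mk_right u v, by omega⟩
    obtain ⟨x, hxe, hdeg⟩ := hx
    obtain ⟨e', he'G', hwe', he'M, hM'⟩ := hM.exists_replace_edge hG' heM hxe hdeg
    have hbad : (insert e' (M.erase e)).filter (· ∉ G'.edgeSet) =
        (M.filter (· ∉ G'.edgeSet)).erase e := by
      rw [filter_insert, if_neg (not_not.2 he'G'), filter_erase]
    obtain ⟨M'', hM'', hsum⟩ := ih hM' (by rw [hbad, card_erase_of_mem he, hn]; rfl)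
    refine ⟨M'', hM'', ?_⟩
    rw [hsum, sum_insert he'M, hwe', add_sum_erase M w heM]

end Weighted

theorem stmt_4_general {V : Type*} [Fintype V] [DecidableEq V]
    (k : ℕ) (hk : 1 ≤ k)
    (G G' : SimpleGraph V) [DecidableRel G'.Adj]
    (hsub : G' ≤ G)
    (w : Sym2 V → ℝ)
    (hmatch : ∀ M : Finset (Sym2 V), IsMatchingSet G M → M.card ≤ k)
    (hdel : ∀ u v : V, G.Adj u v → ¬ G'.Adj u v →
      5 * k ≤ degW G' w (w s(u, v)) u ∨ 5 * k ≤ degW G' w (w s(u, v)) v) :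
    sSup {x : ℝ | ∃ M : Finset (Sym2 V), IsMatchingSet G M ∧ ∑ e ∈ M, w e = x} =
      sSup {x : ℝ | ∃ M : Finset (Sym2 V), IsMatchingSet G' M ∧ ∑ e ∈ M, w e = x} := by
  have hdel' : ∀ u v : V, G.Adj u v → ¬ G'.Adj u v →
      2 * k < degW G' w (w s(u, v)) u ∨ 2 * k < degW G' w (w s(u, v)) v :=
    fun u v huv hnot => (hdel u v huv hnot).imp (by omega) (by omega)
  congr 1
  ext x
  constructor
  · rintro ⟨M, hM, rfl⟩
    exact hM.exists_subgraph_sum_eq k hsub hmatch hdel'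
  · rintro ⟨M, hM, rfl⟩
    exact ⟨M, hM.mono hsub, rfl⟩

theorem stmt_4 {V : Type*} [Fintype V] [DecidableEq V]
    (k : ℕ) (hk : 1 ≤ k)
    (G G' : SimpleGraph V) [DecidableRel G.Adj] [DecidableRel G'.Adj]
    (hsub : G' ≤ G)
    (w : Sym2 V → ℝ) (hw : ∀ e ∈ G.edgeSet, 0 < w e)
    (hmatch : ∀ M : Finset (Sym2 V), IsMatchingSet G M → M.card ≤ k)
    (hdel : ∀ u v : V, G.Adj u v → ¬ G'.Adj u v →
      5 * k ≤ degW G' w (w s(u, v)) u ∨ 5 * k ≤ degW G' w (w s(u, v)) v) :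
    sSup {x : ℝ | ∃ M : Finset (Sym2 V), IsMatchingSet G M ∧ ∑ e ∈ M, w e = x} =
      sSup {x : ℝ | ∃ M : Finset (Sym2 V), IsMatchingSet G' M ∧ ∑ e ∈ M, w e = x} :=
  stmt_4_general k hk G G' hsub w hmatch hdel
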